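/- arXiv:1308.3662 — 5 statements merged into one kernel-verified Lean document; each statement's English description precedes it below -/
import Mathlib

section
/- Consider the heterogeneous SAIS mean-field dynamics on a connected simple undirected graph with adjacency matrix A. Suppose p, q : [0,∞) → ℝⁿ satisfy, for all t ≥ 0 and all i, the ODEs ṗ_i = β_i(1−p_i−q_i)Σ_j a_ij p_j + r_i β_i q_i Σ_j a_ij p_j − δ_i p_i and q̇_i = κ_i(1−p_i−q_i)Σ_j a_ij p_j − r_i β_i q_i Σ_j a_ij p_j, with 0 ≤ p_i(t), 0 ≤ q_i(t), p_i(t)+q_i(t) ≤ 1. If the symmetric matrix (LB)^{1/2} A (LB)^{1/2} − MD is negative definite (equivalently, the largest eigenvalue of LBA − MD is negative), then lim_{t→∞} p_i(t) = 0 for every i. -/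
open Matrix Filter Set Topology

/-!
Put `S = (LB)^{1/2} = diag s` and `N = S A S - MD`. Off the diagonal `N` is nonnegative, and it
is negative definite, so `N u = -1` has a solution `u ≥ 0`. With the weights `c = S⁻¹ u` and
`m = κ̄ + r` (the diagonal of `M`), the function `V = ∑ cᵢ (mᵢ pᵢ - (1 - rᵢ) qᵢ)` is bounded below
along solutions and `V' ≤ -∑ pᵢ / sᵢ`. As `pᵢ` decreases at rate at most `δᵢ`, every excursion
`pᵢ(t) ≥ ε` costs `V` a fixed amount, so `pᵢ → 0`.
-/

theorem sub_le_mul_sub_of_hasDerivWithinAt_Ici {f f' : ℝ → ℝ} {a b C : ℝ}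
    (hf : ∀ t, 0 ≤ t → HasDerivWithinAt f (f' t) (Ici 0) t) (ha : 0 ≤ a) (hab : a ≤ b)
    (hC : ∀ t ∈ Ico a b, f' t ≤ C) : f b - f a ≤ C * (b - a) := by
  have hsub : ∀ x, a ≤ x → Ici x ⊆ Ici (0 : ℝ) := fun x hx => Ici_subset_Ici.2 (ha.trans hx)
  have hB : ∀ x, HasDerivWithinAt (fun x => f a + C * (x - a)) C (Ici x) x := fun x => by
    simpa using (((hasDerivAt_id x).sub_const a).const_mul C).const_add (f a) |>.hasDerivWithinAt
  have := image_le_of_deriv_right_le_deriv_boundary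
    (fun x hx => (hf x (ha.trans hx.1)).continuousWithinAt.mono
      (Icc_subset_Ici_self.trans (hsub a le_rfl)))
    (fun x hx => (hf x (ha.trans hx.1)).mono (hsub x hx.1)) (by simp)
    (by fun_prop) (fun x _ => hB x) hC (right_mem_Icc.2 hab)
  linarith

theorem mul_sub_le_sub_of_hasDerivWithinAt_le_neg {f f' V V' : ℝ → ℝ} {C t h : ℝ} (hC : 0 ≤ C)
    (hf : ∀ t, 0 ≤ t → HasDerivWithinAt f (f' t) (Ici 0) t) (hf' : ∀ t, 0 ≤ t → -C ≤ f' t)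
    (hV : ∀ t, 0 ≤ t → HasDerivWithinAt V (V' t) (Ici 0) t) (hV' : ∀ t, 0 ≤ t → V' t ≤ -f t)
    (ht : 0 ≤ t) (hh : 0 ≤ h) : h * (f t - C * h) ≤ V t - V (t + h) := by
  have hf_lower : ∀ s ∈ Ico t (t + h), f t - C * h ≤ f s := fun s hs => by
    have hmvt := sub_le_mul_sub_of_hasDerivWithinAt_Ici (fun u hu => (hf u hu).neg) ht hs.1
      fun u hu => neg_le.1 (hf' u (ht.trans hu.1))
    have : C * (s - t) ≤ C * h := mul_le_mul_of_nonneg_left (by linarith [hs.2]) hC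
    simp only [Pi.neg_apply] at hmvt
    linarith
  have := sub_le_mul_sub_of_hasDerivWithinAt_Ici hV ht (le_add_of_nonneg_right hh)
    fun s hs => (hV' s (ht.trans hs.1)).trans (neg_le_neg (hf_lower s hs))
  linarith

theorem AntitoneOn.tendsto_sub_add_atTop {V : ℝ → ℝ} (hV : AntitoneOn V (Ici 0))
    (hVb : BddBelow (V '' Ici 0)) (h : ℝ) :
    Tendsto (fun t => V t - V (t + h)) atTop (𝓝 0) := by
  set g : ℝ → ℝ := fun t => V (max t 0)
  have hg : Antitone g := fun a b hab =>
    hV (le_max_right a 0) (le_max_right b 0) (max_le_max_right 0 hab)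
  have hlim := tendsto_atTop_ciInf hg
    (hVb.mono (range_subset_iff.2 fun t => mem_image_of_mem V (le_max_right t 0)))
  have := hlim.sub (hlim.comp (tendsto_atTop_add_const_right _ h tendsto_id))
  rw [sub_self] at this
  refine this.congr' ?_
  filter_upwards [eventually_ge_atTop 0, eventually_ge_atTop (-h)] with t ht ht'
  simp [g, max_eq_left ht, max_eq_left (by linarith : 0 ≤ t + h)]

theorem tendsto_zero_of_hasDerivWithinAt_le_neg {f f' V V' : ℝ → ℝ} {C : ℝ} (hC : 0 ≤ C)
    (hf : ∀ t, 0 ≤ t → HasDerivWithinAt f (f' t) (Ici 0) t) (hf' : ∀ t, 0 ≤ t → -C ≤ f' t)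
    (hf0 : ∀ t, 0 ≤ t → 0 ≤ f t)
    (hV : ∀ t, 0 ≤ t → HasDerivWithinAt V (V' t) (Ici 0) t) (hV' : ∀ t, 0 ≤ t → V' t ≤ -f t)
    (hVb : BddBelow (V '' Ici 0)) : Tendsto f atTop (𝓝 0) := by
  have hV_anti : AntitoneOn V (Ici 0) := fun a ha b _ hab => by
    have := sub_le_mul_sub_of_hasDerivWithinAt_Ici hV ha hab (C := 0)
      fun t ht => (hV' t (ha.trans ht.1)).trans (neg_nonpos.2 (hf0 t (ha.trans ht.1)))
    linarith
  refine tendsto_order.2 ⟨fun a ha => eventually_atTop.2 ⟨0, fun t ht => ha.trans_le (hf0 t ht)⟩,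
    fun ε hε => ?_⟩
  obtain ⟨h, hh, hCh⟩ := exists_pos_mul_lt (half_pos hε) C
  filter_upwards [(hV_anti.tendsto_sub_add_atTop hVb h).eventually
    (gt_mem_nhds (mul_pos hh (half_pos hε))), eventually_ge_atTop 0] with t hVt ht
  have := mul_sub_le_sub_of_hasDerivWithinAt_le_neg hC hf hf' hV hV' ht hh.le
  nlinarith

section FiniteIndex

variable {ι : Type*} [Fintype ι]

def Matrix.IsMetzler (M : Matrix ι ι ℝ) : Prop := ∀ i j, i ≠ j → 0 ≤ M i j

-- The negative part `v` of `x` satisfies `v ⬝ᵥ M *ᵥ v ≥ v ⬝ᵥ M *ᵥ x⁺ ≥ 0`, so `v = 0`.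
theorem Matrix.IsMetzler.nonneg_of_mulVec_nonpos {M : Matrix ι ι ℝ} (hM : M.IsMetzler)
    (hneg : ∀ x, x ≠ 0 → x ⬝ᵥ (M *ᵥ x) < 0) {x : ι → ℝ} (hx : M *ᵥ x ≤ 0) : 0 ≤ x := by
  have hcross : 0 ≤ x⁻ ⬝ᵥ (M *ᵥ x⁺) := by
    simp only [dotProduct, mulVec, Finset.mul_sum]
    refine Finset.sum_nonneg fun i _ => Finset.sum_nonneg fun j _ => ?_
    rcases eq_or_ne i j with rfl | hij
    · rcases le_total (x i) 0 with h | h <;> simp [h]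
    · exact mul_nonneg (negPart_nonneg _) (mul_nonneg (hM i j hij) (posPart_nonneg _))
  have hsplit : M *ᵥ x = M *ᵥ x⁺ - M *ᵥ x⁻ := by rw [← mulVec_sub, posPart_sub_negPart]
  have hneg_part : x⁻ = 0 := by
    by_contra h
    have := dotProduct_nonneg_of_nonneg (negPart_nonneg x) (neg_nonneg.2 hx)
    rw [dotProduct_neg, hsplit, dotProduct_sub] at this
    linarith [hneg x⁻ h]
  rw [← posPart_sub_negPart x, hneg_part, sub_zero]
  exact posPart_nonneg x

theorem Matrix.IsMetzler.exists_nonneg_mulVec_eq_neg_one {M : Matrix ι ι ℝ} (hM : M.IsMetzler)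
    (hneg : ∀ x, x ≠ 0 → x ⬝ᵥ (M *ᵥ x) < 0) : ∃ u, 0 ≤ u ∧ M *ᵥ u = -1 := by
  have hinj : Function.Injective M.mulVecLin := by
    rw [← LinearMap.ker_eq_bot, LinearMap.ker_eq_bot']
    intro x hx
    by_contra hx0
    simpa [show M *ᵥ x = 0 from hx] using hneg x hx0
  obtain ⟨u, hu⟩ := LinearMap.injective_iff_surjective.mp hinj (-1)
  replace hu : M *ᵥ u = -1 := hu
  exact ⟨u, hM.nonneg_of_mulVec_nonpos hneg (by simp [hu]), hu⟩

theorem Matrix.isMetzler_diagonal_mul_mul_diagonal_sub [DecidableEq ι] {A : Matrix ι ι ℝ}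
    (hA : ∀ i j, 0 ≤ A i j) {s : ι → ℝ} (hs : 0 ≤ s) (d : ι → ℝ) :
    (diagonal s * A * diagonal s - diagonal d).IsMetzler := fun i j hij => by
  simpa [diagonal_apply_ne _ hij] using mul_nonneg (mul_nonneg (hs i) (hA i j)) (hs j)


theorem sum_div_mul_sub_eq_neg_sum_div [DecidableEq ι] {A : Matrix ι ι ℝ} (hA : A.IsSymm)
    {s d u : ι → ℝ} (hs : ∀ i, s i ≠ 0)
    (hu : (diagonal s * A * diagonal s - diagonal d) *ᵥ u = -1) (x : ι → ℝ) :
    ∑ i, u i / s i * (s i ^ 2 * (A *ᵥ x) i - d i * x i) = -∑ i, x i / s i := by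
  set w := diagonal s *ᵥ u
  have hrow : ∀ i, d i * u i = s i * (A *ᵥ w) i + 1 := fun i => by
    have := congrFun hu i
    simp only [sub_mulVec, ← mulVec_mulVec, Pi.sub_apply, mulVec_diagonal, Pi.neg_apply,
      Pi.one_apply] at this
    linarith
  have hterm : ∀ i, u i / s i * (s i ^ 2 * (A *ᵥ x) i - d i * x i)
      = w i * (A *ᵥ x) i - (A *ᵥ w) i * x i - x i / s i := fun i => by
    have hwi : w i = s i * u i := mulVec_diagonal s u i
    rw [hwi]
    field_simp [hs i]
    linear_combination (-x i) * hrow i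
  have hsym : w ⬝ᵥ (A *ᵥ x) = (A *ᵥ w) ⬝ᵥ x := by
    rw [dotProduct_mulVec, ← vecMul_transpose, hA.eq]
  unfold dotProduct at hsym
  rw [Finset.sum_congr rfl fun i _ => hterm i, Finset.sum_sub_distrib, Finset.sum_sub_distrib,
    hsym, sub_self, zero_sub]

def saisInfectionRate (A : Matrix ι ι ℝ) (β δ r x y : ι → ℝ) (i : ι) : ℝ :=
  β i * (1 - x i - y i) * (A *ᵥ x) i + r i * β i * y i * (A *ᵥ x) i - δ i * x i

def saisAlertRate (A : Matrix ι ι ℝ) (β κ r x y : ι → ℝ) (i : ι) : ℝ :=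
  κ i * (1 - x i - y i) * (A *ᵥ x) i - r i * β i * y i * (A *ᵥ x) i

theorem neg_le_saisInfectionRate {A : Matrix ι ι ℝ} (hA : ∀ i j, 0 ≤ A i j) {β δ r x y : ι → ℝ}
    {i : ι} (hβ : 0 ≤ β i) (hδ : 0 ≤ δ i) (hr : 0 ≤ r i) (hx : 0 ≤ x) (hy : 0 ≤ y i)
    (hxy : x i + y i ≤ 1) : -δ i ≤ saisInfectionRate A β δ r x y i := by
  have hAx : 0 ≤ (A *ᵥ x) i := Finset.sum_nonneg fun j _ => mul_nonneg (hA i j) (hx j)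
  have : 0 ≤ β i * (1 - x i - y i) * (A *ᵥ x) i := mul_nonneg (mul_nonneg hβ (by linarith)) hAx
  have : x i ≤ 1 := by linarith
  unfold saisInfectionRate
  nlinarith [mul_nonneg (mul_nonneg (mul_nonneg hr hβ) hy) hAx]

-- In `m ṗ - (1 - r) q̇` with `m = κ/β + r` both the `(1 - p - q) w` and the `q w` terms
-- get the coefficient `(r κ/β + r) β`, so only `(1 - p) w` survives.
theorem sais_rate_combination_le {β δ κ r x y w : ℝ} (hβ : 0 < β) (hκ : 0 < κ) (hr : 0 < r)
    (hx : 0 ≤ x) (hw : 0 ≤ w) :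
    (κ / β + r) * (β * (1 - x - y) * w + r * β * y * w - δ * x)
        - (1 - r) * (κ * (1 - x - y) * w - r * β * y * w)
      ≤ (r * (κ / β) + r) * β * w - (κ / β + r) * δ * x := by
  have hL : 0 ≤ (r * (κ / β) + r) * β := by positivity
  have : (κ / β + r) * (β * (1 - x - y) * w + r * β * y * w - δ * x)
        - (1 - r) * (κ * (1 - x - y) * w - r * β * y * w)
      = (r * (κ / β) + r) * β * (1 - x) * w - (κ / β + r) * δ * x := by
    field_simp
    ring
  rw [this]
  nlinarith [mul_nonneg (mul_nonneg hL hx) hw]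

theorem sum_div_mul_sais_rate_le [DecidableEq ι] {A : Matrix ι ι ℝ} (hA0 : ∀ i j, 0 ≤ A i j)
    (hA : A.IsSymm) {β δ κ r s u x y : ι → ℝ} (hβ : ∀ i, 0 < β i) (hκ : ∀ i, 0 < κ i)
    (hr : ∀ i, 0 < r i) (hs_pos : ∀ i, 0 < s i)
    (hs_sq : ∀ i, s i ^ 2 = (r i * (κ i / β i) + r i) * β i) (hu0 : 0 ≤ u)
    (hu : (diagonal s * A * diagonal s - diagonal (fun i => (κ i / β i + r i) * δ i)) *ᵥ u = -1)
    (hx : 0 ≤ x) :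
    ∑ i, u i / s i * ((κ i / β i + r i) * saisInfectionRate A β δ r x y i
        - (1 - r i) * saisAlertRate A β κ r x y i) ≤ -∑ i, x i / s i := by
  rw [← sum_div_mul_sub_eq_neg_sum_div hA (fun i => (hs_pos i).ne') hu x]
  refine Finset.sum_le_sum fun i _ =>
    mul_le_mul_of_nonneg_left ?_ (div_nonneg (hu0 i) (hs_pos i).le)
  rw [hs_sq i]
  exact sais_rate_combination_le (hβ i) (hκ i) (hr i) (hx i)
    (Finset.sum_nonneg fun j _ => mul_nonneg (hA0 i j) (hx j))

theorem tendsto_sais_infection_zero [DecidableEq ι] {A : Matrix ι ι ℝ}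
    (hA0 : ∀ i j, 0 ≤ A i j) (hA : A.IsSymm) {β δ κ r s : ι → ℝ}
    (hβ : ∀ i, 0 < β i) (hδ : ∀ i, 0 < δ i) (hκ : ∀ i, 0 < κ i) (hr : ∀ i, 0 < r i)
    (hs_pos : ∀ i, 0 < s i) (hs_sq : ∀ i, s i ^ 2 = (r i * (κ i / β i) + r i) * β i)
    {p q : ℝ → ι → ℝ}
    (hbound : ∀ t, 0 ≤ t → ∀ i, 0 ≤ p t i ∧ 0 ≤ q t i ∧ p t i + q t i ≤ 1)
    (hp : ∀ t, 0 ≤ t → ∀ i,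
      HasDerivWithinAt (fun s => p s i) (saisInfectionRate A β δ r (p t) (q t) i) (Ici 0) t)
    (hq : ∀ t, 0 ≤ t → ∀ i,
      HasDerivWithinAt (fun s => q s i) (saisAlertRate A β κ r (p t) (q t) i) (Ici 0) t)
    (hND : ∀ x, x ≠ 0 → x ⬝ᵥ ((diagonal s * A * diagonal s
      - diagonal (fun i => (κ i / β i + r i) * δ i)) *ᵥ x) < 0) (i : ι) :
    Tendsto (fun t => p t i) atTop (𝓝 0) := by
  obtain ⟨u, hu0, hu⟩ := (isMetzler_diagonal_mul_mul_diagonal_sub hA0 (fun j => (hs_pos j).le)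
    _).exists_nonneg_mulVec_eq_neg_one hND
  refine tendsto_zero_of_hasDerivWithinAt_le_neg (hδ i).le (fun t ht => hp t ht i)
    (fun t ht => neg_le_saisInfectionRate hA0 (hβ i).le (hδ i).le (hr i).le
      (fun j => (hbound t ht j).1) (hbound t ht i).2.1 (hbound t ht i).2.2)
    (fun t ht => (hbound t ht i).1)
    (V := fun t => s i * ∑ j, u j / s j * ((κ j / β j + r j) * p t j - (1 - r j) * q t j))
    (fun t ht => (HasDerivWithinAt.fun_sum fun j _ =>
      (((hp t ht j).const_mul _).sub ((hq t ht j).const_mul _)).const_mul _).const_mul (s i))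
    (fun t ht => ?_) ⟨s i * -∑ j, u j / s j, ?_⟩
  · have hsingle : p t i / s i ≤ ∑ j, p t j / s j := Finset.single_le_sum
      (fun j _ => div_nonneg (hbound t ht j).1 (hs_pos j).le) (Finset.mem_univ i)
    calc _ ≤ s i * -(p t i / s i) := mul_le_mul_of_nonneg_left
          ((sum_div_mul_sais_rate_le hA0 hA hβ hκ hr hs_pos hs_sq hu0 hu
            fun j => (hbound t ht j).1).trans (neg_le_neg hsingle)) (hs_pos i).le
      _ = -p t i := by field_simp [(hs_pos i).ne']
  · rintro _ ⟨t, ht, rfl⟩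
    refine mul_le_mul_of_nonneg_left ?_ (hs_pos i).le
    rw [← Finset.sum_neg_distrib]
    refine Finset.sum_le_sum fun j _ => ?_
    obtain ⟨hpj, hqj, hpqj⟩ := hbound t ht j
    have hc : 0 ≤ u j / s j := div_nonneg (hu0 j) (hs_pos j).le
    have hm : 0 ≤ (κ j / β j + r j) * p t j := by
      have := hβ j; have := hκ j; have := hr j; positivity
    have hrq : (1 - r j) * q t j ≤ 1 := by nlinarith [hr j]
    nlinarith [mul_nonneg hc hm, mul_le_mul_of_nonneg_left hrq hc]

end FiniteIndex

theorem stmt_0_general {n : ℕ} (G : SimpleGraph (Fin n)) [DecidableRel G.Adj]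
    (β δ κ r : Fin n → ℝ)
    (hβ : ∀ i, 0 < β i) (hδ : ∀ i, 0 < δ i) (hκ : ∀ i, 0 < κ i)
    (hr : ∀ i, 0 < r i ∧ r i < 1)
    (p q : ℝ → Fin n → ℝ)
    (hbound : ∀ t, 0 ≤ t → ∀ i, 0 ≤ p t i ∧ 0 ≤ q t i ∧ p t i + q t i ≤ 1)
    (hp : ∀ t, 0 ≤ t → ∀ i,
      HasDerivWithinAt (fun s => p s i)
        (β i * (1 - p t i - q t i) * (∑ j, G.adjMatrix ℝ i j * p t j)
          + r i * β i * q t i * (∑ j, G.adjMatrix ℝ i j * p t j)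
          - δ i * p t i) (Set.Ici 0) t)
    (hq : ∀ t, 0 ≤ t → ∀ i,
      HasDerivWithinAt (fun s => q s i)
        (κ i * (1 - p t i - q t i) * (∑ j, G.adjMatrix ℝ i j * p t j)
          - r i * β i * q t i * (∑ j, G.adjMatrix ℝ i j * p t j)) (Set.Ici 0) t)
    (hND : ∀ x : Fin n → ℝ, x ≠ 0 →
      x ⬝ᵥ ((Matrix.diagonal (fun i => Real.sqrt ((r i * (κ i / β i) + r i) * β i))
            * G.adjMatrix ℝ
            * Matrix.diagonal (fun i => Real.sqrt ((r i * (κ i / β i) + r i) * β i))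
          - Matrix.diagonal (fun i => κ i / β i + r i) * Matrix.diagonal δ) *ᵥ x) < 0) :
    ∀ i, Tendsto (fun t => p t i) atTop (nhds 0) := by
  have hL : ∀ i, 0 < (r i * (κ i / β i) + r i) * β i := fun i => by
    have := hβ i; have := hκ i; have := (hr i).1; positivity
  rw [diagonal_mul_diagonal] at hND
  exact tendsto_sais_infection_zero (fun i j => by by_cases h : G.Adj i j <;> simp [h])
    G.isSymm_adjMatrix hβ hδ hκ (fun i => (hr i).1) (fun i => Real.sqrt_pos.2 (hL i))
    (fun i => Real.sq_sqrt (hL i).le) hbound hp hq hND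

/-- If the symmetric matrix `(LB)^{1/2} A (LB)^{1/2} - MD` is negative definite, then the
infection probabilities of the heterogeneous SAIS mean-field model tend to zero. -/
theorem stmt_0 {n : ℕ} (G : SimpleGraph (Fin n)) [DecidableRel G.Adj]
    (hconn : G.Connected)
    (β δ κ r : Fin n → ℝ)
    (hβ : ∀ i, 0 < β i) (hδ : ∀ i, 0 < δ i) (hκ : ∀ i, 0 < κ i)
    (hr : ∀ i, 0 < r i ∧ r i < 1)
    (p q : ℝ → Fin n → ℝ)
    (hbound : ∀ t, 0 ≤ t → ∀ i, 0 ≤ p t i ∧ 0 ≤ q t i ∧ p t i + q t i ≤ 1)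
    (hp : ∀ t, 0 ≤ t → ∀ i,
      HasDerivWithinAt (fun s => p s i)
        (β i * (1 - p t i - q t i) * (∑ j, G.adjMatrix ℝ i j * p t j)
          + r i * β i * q t i * (∑ j, G.adjMatrix ℝ i j * p t j)
          - δ i * p t i) (Set.Ici 0) t)
    (hq : ∀ t, 0 ≤ t → ∀ i,
      HasDerivWithinAt (fun s => q s i)
        (κ i * (1 - p t i - q t i) * (∑ j, G.adjMatrix ℝ i j * p t j)
          - r i * β i * q t i * (∑ j, G.adjMatrix ℝ i j * p t j)) (Set.Ici 0) t)
    (hND : ∀ x : Fin n → ℝ, x ≠ 0 →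
      x ⬝ᵥ ((Matrix.diagonal (fun i => Real.sqrt ((r i * (κ i / β i) + r i) * β i))
            * G.adjMatrix ℝ
            * Matrix.diagonal (fun i => Real.sqrt ((r i * (κ i / β i) + r i) * β i))
          - Matrix.diagonal (fun i => κ i / β i + r i) * Matrix.diagonal δ) *ᵥ x) < 0) :
    ∀ i, Tendsto (fun t => p t i) atTop (nhds 0) :=
  stmt_0_general G β δ κ r hβ hδ hκ hr p q hbound hp hq hND
end

section
/- Let A ∈ ℝ^{n×n} be symmetric and let L, B, M, D be positive diagonal matrices (all diagonal entries strictly positive). Then all eigenvalues of LBA − MD are real, and the largest eigenvalue of LBA − MD is at most 0 if and only if the symmetric matrix A − (LB)^{-1}MD is negative semidefinite. -/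
/-!
Write `LBA - MD = P * S` with `P = LB` positive definite and `S = A - P⁻¹MD` symmetric. An
eigenpair `P S v = μ v` gives `v⋆ S v = μ (v⋆ P⁻¹ v)` with `v⋆ P⁻¹ v > 0`; hence `μ` is real,
and `μ ≤ 0` as soon as `S` is negative semidefinite. Conversely, with `R = √P`, the matrix `P S` is
similar to the symmetric matrix `R S R`; if all real eigenvalues of `P S` are `≤ 0`, then `R S R`
is negative semidefinite by the spectral theorem, and so is its congruent `S`.
-/

open Matrix
open scoped ComplexOrder MatrixOrder

namespace Matrix

variable {ι : Type*} [Fintype ι] [DecidableEq ι]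

theorem mulVec_eq_smul_nonsing_inv_mulVec_of_mul {R : Type*} [CommRing R] {P S : Matrix ι ι R}
    (hP : IsUnit P) {μ : R} {v : ι → R} (h : (P * S) *ᵥ v = μ • v) :
    S *ᵥ v = μ • (P⁻¹ *ᵥ v) := by
  rw [← mulVec_smul, ← h, mulVec_mulVec,
    nonsing_inv_mul_cancel_left _ _ ((isUnit_iff_isUnit_det P).mp hP)]

theorem PosDef.im_eq_zero_of_mul_mulVec_eq_smul {𝕜 : Type*} [RCLike 𝕜]
    {P S : Matrix ι ι 𝕜} (hP : P.PosDef) (hS : S.IsHermitian) {μ : 𝕜} {v : ι → 𝕜} (hv : v ≠ 0)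
    (h : (P * S) *ᵥ v = μ • v) : RCLike.im μ = 0 := by
  obtain ⟨hq_re, hq_im⟩ := RCLike.pos_iff.mp (hP.inv.dotProduct_mulVec_pos hv)
  have hSv := hS.im_star_dotProduct_mulVec_self v
  rw [mulVec_eq_smul_nonsing_inv_mulVec_of_mul hP.isUnit h, dotProduct_smul, smul_eq_mul,
    RCLike.mul_im, hq_im, mul_zero, zero_add] at hSv
  exact (mul_eq_zero.mp hSv).resolve_right hq_re.ne'

theorem PosDef.nonpos_of_mul_mulVec_eq_smul {P S : Matrix ι ι ℝ} (hP : P.PosDef)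
    (hS : ∀ x, x ⬝ᵥ (S *ᵥ x) ≤ 0) {μ : ℝ} {v : ι → ℝ} (hv : v ≠ 0)
    (h : (P * S) *ᵥ v = μ • v) : μ ≤ 0 := by
  have hq : 0 < v ⬝ᵥ (P⁻¹ *ᵥ v) := by simpa using hP.inv.dotProduct_mulVec_pos hv
  have hSv := hS v
  rw [mulVec_eq_smul_nonsing_inv_mulVec_of_mul hP.isUnit h, dotProduct_smul, smul_eq_mul] at hSv
  exact nonpos_of_mul_nonpos_left hSv hq

theorem IsHermitian.posSemidef_neg_of_eigenvalue_nonpos {T : Matrix ι ι ℝ}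
    (hT : T.IsHermitian) (h : ∀ (μ : ℝ) (v : ι → ℝ), v ≠ 0 → T *ᵥ v = μ • v → μ ≤ 0) :
    (-T).PosSemidef := by
  refine hT.neg.posSemidef_iff_eigenvalues_nonneg.mpr fun i => ?_
  have hw := hT.neg.mulVec_eigenvectorBasis i
  rw [neg_mulVec, neg_eq_iff_eq_neg, ← neg_smul] at hw
  have hw0 : ⇑(hT.neg.eigenvectorBasis i) ≠ 0 := fun h0 =>
    hT.neg.eigenvectorBasis.orthonormal.ne_zero i (by ext k; exact congrFun h0 k)
  exact neg_nonpos.mp (h _ _ hw0 hw)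

theorem PosDef.posSemidef_neg_of_eigenvalue_mul_nonpos {P S : Matrix ι ι ℝ} (hP : P.PosDef)
    (hS : S.IsHermitian)
    (h : ∀ (μ : ℝ) (v : ι → ℝ), v ≠ 0 → (P * S) *ᵥ v = μ • v → μ ≤ 0) :
    (-S).PosSemidef := by
  set R := CFC.sqrt P
  have hRR : R * R = P := CFC.sqrt_mul_sqrt_self P hP.posSemidef.nonneg
  have hRh : R.IsHermitian := (CFC.sqrt_nonneg P).posSemidef.isHermitian
  have hRu : IsUnit R := isUnit_of_mul_isUnit_left (hRR ▸ hP.isUnit)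
  have hT : (R * S * R).IsHermitian := by
    simpa only [hRh.eq] using isHermitian_conjTranspose_mul_mul R hS
  have hTneg := hT.posSemidef_neg_of_eigenvalue_nonpos fun μ w hw hTw =>
    h μ (R *ᵥ w) ((mulVec_injective_iff_isUnit.mpr hRu).ne_iff' (mulVec_zero R) |>.mpr hw) <| by
      rw [← hRR, mulVec_mulVec, Matrix.mul_assoc, Matrix.mul_assoc, ← mulVec_mulVec,
        ← Matrix.mul_assoc, hTw, mulVec_smul]
  have hRd := (isUnit_iff_isUnit_det R).mp hRu
  convert hTneg.conjTranspose_mul_mul_same R⁻¹ using 1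
  rw [conjTranspose_nonsing_inv, hRh.eq, Matrix.mul_neg, Matrix.neg_mul, Matrix.mul_assoc,
    Matrix.mul_assoc, mul_nonsing_inv _ hRd, Matrix.mul_one, nonsing_inv_mul_cancel_left _ _ hRd]

end Matrix

theorem stmt_1_general {n : ℕ} (A : Matrix (Fin n) (Fin n) ℝ) (hA : A.IsSymm)
    (l b m d : Fin n → ℝ)
    (hl : ∀ i, 0 < l i) (hb : ∀ i, 0 < b i) :
    (∀ μ : ℂ, (∃ v : Fin n → ℂ, v ≠ 0 ∧
        ((diagonal l * diagonal b * A - diagonal m * diagonal d).map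
          (Complex.ofReal)) *ᵥ v = μ • v) → μ.im = 0) ∧
    ((∀ μ : ℝ, (∃ v : Fin n → ℝ, v ≠ 0 ∧
        (diagonal l * diagonal b * A - diagonal m * diagonal d) *ᵥ v = μ • v) → μ ≤ 0) ↔
      (∀ x : Fin n → ℝ,
        x ⬝ᵥ ((A - (diagonal l * diagonal b)⁻¹ * (diagonal m * diagonal d)) *ᵥ x) ≤ 0)) := by
  rw [diagonal_mul_diagonal, diagonal_mul_diagonal]
  set p : Fin n → ℝ := fun i => l i * b i
  set S := A - (diagonal p)⁻¹ * diagonal (fun i => m i * d i)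
  have hp : ∀ i, 0 < p i := fun i => mul_pos (hl i) (hb i)
  have hP : (diagonal p).PosDef := .diagonal hp
  have hS : S.IsHermitian := (isHermitian_iff_isSymm.mpr hA).sub (by
    rw [inv_diagonal, diagonal_mul_diagonal]; exact isHermitian_diagonal _)
  have hX : diagonal p * A - diagonal (fun i => m i * d i) = diagonal p * S := by
    rw [mul_sub, mul_nonsing_inv_cancel_left _ _ ((isUnit_iff_isUnit_det _).mp hP.isUnit)]
  refine ⟨fun μ ⟨v, hv, h⟩ => ?_, fun h x => ?_, fun h μ ⟨v, hv, hμ⟩ => ?_⟩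
  · rw [hX, show (Complex.ofReal : ℝ → ℂ) = Complex.ofRealHom from rfl, Matrix.map_mul,
      diagonal_map (map_zero _)] at h
    exact PosDef.im_eq_zero_of_mul_mulVec_eq_smul
      (.diagonal fun i => Complex.zero_lt_real.mpr (hp i))
      (hS.map _ fun x => (Complex.conj_ofReal x).symm) hv h
  · simpa [neg_mulVec] using (hP.posSemidef_neg_of_eigenvalue_mul_nonpos hS
      fun μ v hv hμ => h μ ⟨v, hv, hX ▸ hμ⟩).dotProduct_mulVec_nonneg x
  · exact hP.nonpos_of_mul_mulVec_eq_smul h hv (hX ▸ hμ)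

/-- For symmetric `A` and positive diagonal `L, B, M, D`, all eigenvalues of `LBA - MD` are
real, and the largest eigenvalue of `LBA - MD` is `≤ 0` (i.e. all its real eigenvalues are
`≤ 0`) iff `A - (LB)⁻¹MD` is negative semidefinite. -/
theorem stmt_1 {n : ℕ} (A : Matrix (Fin n) (Fin n) ℝ) (hA : A.IsSymm)
    (l b m d : Fin n → ℝ)
    (hl : ∀ i, 0 < l i) (hb : ∀ i, 0 < b i) (hm : ∀ i, 0 < m i) (hd : ∀ i, 0 < d i) :
    (∀ μ : ℂ, (∃ v : Fin n → ℂ, v ≠ 0 ∧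
        ((diagonal l * diagonal b * A - diagonal m * diagonal d).map
          (Complex.ofReal)) *ᵥ v = μ • v) → μ.im = 0) ∧
    ((∀ μ : ℝ, (∃ v : Fin n → ℝ, v ≠ 0 ∧
        (diagonal l * diagonal b * A - diagonal m * diagonal d) *ᵥ v = μ • v) → μ ≤ 0) ↔
      (∀ x : Fin n → ℝ,
        x ⬝ᵥ ((A - (diagonal l * diagonal b)⁻¹ * (diagonal m * diagonal d)) *ᵥ x) ≤ 0)) :=
  stmt_1_general A hA l b m d hl hb
end

section
/- Let (p*, q*) be an equilibrium of the heterogeneous SAIS mean-field model with 0 ≤ p_i* < 1 for all i, i.e., for every i both β_i(1 − p_i* − q_i*) Σ_j a_ij p_j* + r_i β_i q_i* Σ_j a_ij p_j* − δ_i p_i* = 0 and κ_i(1 − p_i* − q_i*) Σ_j a_ij p_j* − r_i β_i q_i* Σ_j a_ij p_j* = 0. Then for every i, p_i*/(1 − p_i*) = (β_i/δ_i) · (r_i (κ̄_i + 1)/(κ̄_i + r_i)) · Σ_j a_ij p_j*, where κ̄_i = κ_i/β_i. -/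
/-!
Write `s` for the infection pressure `∑ⱼ aᵢⱼ pⱼ` at node `i`. Adding the two equilibrium equations
gives `δ p = (β + κ)(1 - p - q) s`, and the second one alone gives `(κ + r β) q s = κ (1 - p) s`.
Eliminating `q s` yields `δ (κ + r β) p = r β (κ + β) (1 - p) s` without ever dividing by `s`,
and dividing by `δ (κ + r β) (1 - p)` is the claim.
-/

lemma sais_equilibrium_balance {β δ κ r p q s : ℝ}
    (h₁ : β * (1 - p - q) * s + r * β * q * s - δ * p = 0)
    (h₂ : κ * (1 - p - q) * s - r * β * q * s = 0) :
    δ * (κ + r * β) * p = r * β * (κ + β) * (1 - p) * s := by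
  linear_combination (β - r * β) * h₂ - (κ + r * β) * h₁

lemma sais_equilibrium_odds {β δ κ r p q s : ℝ} (hβ : 0 < β) (hδ : 0 < δ) (hκ : 0 ≤ κ)
    (hr : 0 < r) (hp : p < 1)
    (h₁ : β * (1 - p - q) * s + r * β * q * s - δ * p = 0)
    (h₂ : κ * (1 - p - q) * s - r * β * q * s = 0) :
    p / (1 - p) = (β / δ) * (r * (κ / β + 1) / (κ / β + r)) * s := by
  have hκr : 0 < κ + r * β := by positivity
  have h1p : 0 < 1 - p := by linarith
  rw [div_eq_iff h1p.ne']
  field_simp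
  linear_combination sais_equilibrium_balance h₁ h₂

/-- At an equilibrium `(p*, q*)` of the heterogeneous SAIS mean-field model with
`0 ≤ pᵢ* < 1`, we have `pᵢ*/(1 - pᵢ*) = (βᵢ/δᵢ)·(rᵢ(κ̄ᵢ + 1)/(κ̄ᵢ + rᵢ))·Σⱼ aᵢⱼ pⱼ*`. -/
theorem stmt_6 {n : ℕ} (G : SimpleGraph (Fin n)) [DecidableRel G.Adj]
    (β δ κ r : Fin n → ℝ)
    (hβ : ∀ i, 0 < β i) (hδ : ∀ i, 0 < δ i) (hκ : ∀ i, 0 < κ i)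
    (hr : ∀ i, 0 < r i ∧ r i < 1)
    (p q : Fin n → ℝ) (hp : ∀ i, 0 ≤ p i ∧ p i < 1)
    (heq1 : ∀ i, β i * (1 - p i - q i) * (∑ j, G.adjMatrix ℝ i j * p j)
        + r i * β i * q i * (∑ j, G.adjMatrix ℝ i j * p j) - δ i * p i = 0)
    (heq2 : ∀ i, κ i * (1 - p i - q i) * (∑ j, G.adjMatrix ℝ i j * p j)
        - r i * β i * q i * (∑ j, G.adjMatrix ℝ i j * p j) = 0) :
    ∀ i, p i / (1 - p i)
      = (β i / δ i) * (r i * (κ i / β i + 1) / (κ i / β i + r i)) *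
          (∑ j, G.adjMatrix ℝ i j * p j) := fun i =>
  sais_equilibrium_odds (hβ i) (hδ i) (hκ i).le (hr i).1 (hp i).2 (heq1 i) (heq2 i)
end

section
/- Let G be a connected simple undirected graph on n vertices with adjacency matrix A = [a_ij], let h_i > 0 for all i, and let p* ∈ [0,1)ⁿ satisfy p_i*/(1 − p_i*) = h_i Σ_j a_ij p_j* for every i. Then either p_i* = 0 for all i, or p_i* > 0 for all i. -/
open Matrix

/-- On a connected graph, any solution `p* ∈ [0,1)ⁿ` of `pᵢ*/(1-pᵢ*) = hᵢ Σⱼ aᵢⱼ pⱼ*` with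
`hᵢ > 0` is either identically zero or entrywise strictly positive. -/
theorem stmt_7 {n : ℕ} (G : SimpleGraph (Fin n)) [DecidableRel G.Adj]
    (hconn : G.Connected)
    (h : Fin n → ℝ) (hh : ∀ i, 0 < h i)
    (p : Fin n → ℝ) (hp : ∀ i, 0 ≤ p i ∧ p i < 1)
    (heq : ∀ i, p i / (1 - p i) = h i * ∑ j, G.adjMatrix ℝ i j * p j) :
    (∀ i, p i = 0) ∨ (∀ i, 0 < p i) := by
  have step : ∀ i j, p i = 0 → G.Adj i j → p j = 0 := by
    intro i j hi hij
    have h1 : (1 : ℝ) - p i ≠ 0 := by have := (hp i).2; linarith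
    have hsum : h i * ∑ k, G.adjMatrix ℝ i k * p k = 0 := by
      rw [← heq i, hi, zero_div]
    have hsum0 : ∑ k, G.adjMatrix ℝ i k * p k = 0 :=
      (mul_eq_zero.mp hsum).resolve_left (ne_of_gt (hh i))
    have hterm : ∀ k ∈ Finset.univ, 0 ≤ G.adjMatrix ℝ i k * p k := by
      intro k _
      exact mul_nonneg (by simp [SimpleGraph.adjMatrix]; split <;> norm_num) (hp k).1
    have := (Finset.sum_eq_zero_iff_of_nonneg hterm).mp hsum0 j (Finset.mem_univ j)
    rw [SimpleGraph.adjMatrix_apply, if_pos hij, one_mul] at this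
    exact this
  by_cases hz : ∃ i, p i = 0
  · left
    obtain ⟨i0, hi0⟩ := hz
    intro j
    obtain ⟨w⟩ := hconn.preconnected i0 j
    induction w with
    | nil => exact hi0
    | cons hadj w ih => exact ih (step _ _ hi0 hadj)
  · right
    push_neg at hz
    exact fun i => lt_of_le_of_ne (hp i).1 (Ne.symm (hz i))
end

section
/- Let G be a connected simple undirected graph on n vertices with adjacency matrix A, and for each i let β_i > 0, δ_i > 0, κ_i > 0, 0 < r_i < 1, with κ̄_i = κ_i/β_i. If the symmetric matrix A − diag( (r_i δ_i + κ_i δ_i/β_i)/(r_i β_i + r_i κ_i) ) is negative definite, then the only vector p* ∈ [0,1)ⁿ satisfying, for all i, p_i*/(1 − p_i*) = (β_i/δ_i) · (r_i (κ̄_i + 1)/(κ̄_i + r_i)) · Σ_j a_ij p_j* is p* = 0; that is, under this spectral condition the healthy state is the only equilibrium of the SAIS infection-probability equation. -/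
open Matrix

/-- If `A - diag((rᵢδᵢ + κᵢδᵢ/βᵢ)/(rᵢβᵢ + rᵢκᵢ))` is negative definite, then the healthy
state `p* = 0` is the only solution in `[0,1)ⁿ` of the SAIS equilibrium equation
`pᵢ*/(1 - pᵢ*) = (βᵢ/δᵢ)(rᵢ(κ̄ᵢ+1)/(κ̄ᵢ+rᵢ)) Σⱼ aᵢⱼ pⱼ*`. -/
theorem stmt_15 {n : ℕ} (G : SimpleGraph (Fin n)) [DecidableRel G.Adj]
    (hconn : G.Connected)
    (β δ κ r : Fin n → ℝ)
    (hβ : ∀ i, 0 < β i) (hδ : ∀ i, 0 < δ i) (hκ : ∀ i, 0 < κ i)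
    (hr : ∀ i, 0 < r i ∧ r i < 1)
    (hND : ∀ x : Fin n → ℝ, x ≠ 0 →
      x ⬝ᵥ ((G.adjMatrix ℝ -
          diagonal (fun i => (r i * δ i + κ i * δ i / β i) / (r i * β i + r i * κ i)))
        *ᵥ x) < 0)
    (p : Fin n → ℝ) (hp : ∀ i, 0 ≤ p i ∧ p i < 1)
    (heq : ∀ i, p i / (1 - p i)
      = (β i / δ i) * (r i * (κ i / β i + 1) / (κ i / β i + r i)) *
          (∑ j, G.adjMatrix ℝ i j * p j)) :
    p = 0 := by
  by_contra hne
  have hlt := hND p hne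
  set d : Fin n → ℝ := fun i => (r i * δ i + κ i * δ i / β i) / (r i * β i + r i * κ i)
    with hd
  -- From heq, the row sum equals d i * (p i / (1 - p i))
  have hS : ∀ i, (∑ j, G.adjMatrix ℝ i j * p j) = d i * (p i / (1 - p i)) := by
    intro i
    have hβi := hβ i; have hδi := hδ i; have hκi := hκ i
    obtain ⟨hr0, hr1⟩ := hr i
    have hcd : (β i / δ i) * (r i * (κ i / β i + 1) / (κ i / β i + r i)) * d i = 1 := by
      have h1 : β i ≠ 0 := ne_of_gt hβi
      have h2 : δ i ≠ 0 := ne_of_gt hδi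
      have h3 : κ i / β i + r i ≠ 0 := by positivity
      have h4 : r i * β i + r i * κ i ≠ 0 := by positivity
      have h5 : κ i + r i * β i ≠ 0 := by positivity
      rw [hd]
      field_simp
      ring
    have := heq i
    -- p i / (1 - p i) = c i * S i with c i * d i = 1
    calc (∑ j, G.adjMatrix ℝ i j * p j)
        = ((β i / δ i) * (r i * (κ i / β i + 1) / (κ i / β i + r i)) * d i) *
            (∑ j, G.adjMatrix ℝ i j * p j) := by rw [hcd]; ring
      _ = d i * (p i / (1 - p i)) := by rw [mul_comm _ (d i), mul_assoc, ← this]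
  have hdpos : ∀ i, 0 ≤ d i := by
    intro i
    have hβi := hβ i; have hδi := hδ i; have hκi := hκ i
    obtain ⟨hr0, hr1⟩ := hr i
    rw [hd]
    positivity
  have key : 0 ≤ p ⬝ᵥ ((G.adjMatrix ℝ - diagonal d) *ᵥ p) := by
    rw [sub_mulVec, dotProduct_sub]
    have : p ⬝ᵥ (diagonal d *ᵥ p) = ∑ i, p i * (d i * p i) := by
      simp [dotProduct, mulVec_diagonal]
    rw [this]
    have hA : p ⬝ᵥ (G.adjMatrix ℝ *ᵥ p) = ∑ i, p i * (∑ j, G.adjMatrix ℝ i j * p j) := by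
      simp [dotProduct, mulVec, dotProduct]
    rw [hA, ← Finset.sum_sub_distrib]
    apply Finset.sum_nonneg
    intro i _
    obtain ⟨hp0, hp1⟩ := hp i
    have h1p : 0 < 1 - p i := by linarith
    rw [hS i]
    have hfrac : p i / (1 - p i) - p i = p i ^ 2 / (1 - p i) := by
      field_simp
      ring
    have : p i * (d i * (p i / (1 - p i))) - p i * (d i * p i)
        = p i * d i * (p i ^ 2 / (1 - p i)) := by
      rw [← hfrac]; ring
    rw [this]
    have hdi := hdpos i
    positivity
  linarith
end
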